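/- arXiv:1004.1086 — 2 statements merged into one kernel-verified Lean document; each statement's English description precedes it below -/
import Mathlib

section
/- Let n > m ≥ 0 and define H(j,k) = (−1)^{b(j,k)} for j, k ∈ {0, …, 2ⁿ − 1}, where b(j,k) is the number of bit positions at which the binary expansions of j and k both have a 1. For 0 ≤ i ≤ 2^{n−m} − 1, let W_i be the span in ℝ^{2ⁿ−2^m} of the vectors (H(j, i·2^m + r))_{2^m ≤ j ≤ 2ⁿ−1} for 0 ≤ r ≤ 2^m − 1, and let P_i be the orthogonal projection onto W_i. Then ∑_{i=0}^{2^{n−m}−1} P_i = (2ⁿ/(2ⁿ − 2^m)) · Id; in particular {W_i} is a tight fusion frame for ℝ^{2ⁿ−2^m} with fusion frame bound 2ⁿ/(2ⁿ − 2^m). -/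
open scoped InnerProductSpace

/-- `bitOverlap j k` is the number of bit positions at which the binary
expansions of `j` and `k` both have a `1`. -/
def bitOverlap (j k : ℕ) : ℕ := (Nat.land j k).bits.count true

/-!
The spanning vectors of `W_i` are the columns `k = i·2^m + r` of the Sylvester matrix `H` with
the first `2^m` rows removed. Since `(-1)^{b(a ⊕ b, k)} = (-1)^{b(a, k)} (-1)^{b(b, k)}` and
`∑_k (-1)^{b(c, k)} = 0` for `c ≠ 0`, the rows and the columns of `H` are orthogonal with squared
norm `2ⁿ`. On the first `2^m` rows the columns of block `i` repeat the Sylvester matrix of order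
`2^m`, so after truncation they are still orthogonal, now with squared norm `2ⁿ - 2^m`; hence
`P_i x = (2ⁿ - 2^m)⁻¹ ∑_r ⟪u_{i,r}, x⟫ u_{i,r}`. Summing over `i` runs over all columns of `H`,
and orthogonality of the truncated rows gives `∑_k ⟪u_k, x⟫ u_k = 2ⁿ x`.
-/

namespace Nat

lemma count_true_bits_bit (b : Bool) (x : ℕ) :
    (bit b x).bits.count true = b.toNat + x.bits.count true := by
  by_cases h : b = false ∧ x = 0
  · obtain ⟨rfl, rfl⟩ := h
    simp
  · rw [bits_append_bit x b (by grind)]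
    cases b <;> simp [add_comm]

lemma count_true_bits_two_pow (t : ℕ) : (2 ^ t).bits.count true = 1 := by
  induction t with
  | zero => simp
  | succ t ih => rw [pow_succ', ← bit_false_apply, count_true_bits_bit, ih, Bool.toNat_false]

lemma neg_one_pow_count_true_bits_xor {R : Type*} [CommRing R] (x y : ℕ) :
    (-1 : R) ^ (x ^^^ y).bits.count true =
      (-1) ^ x.bits.count true * (-1) ^ y.bits.count true := by
  induction x using binaryRec generalizing y with
  | zero => simp
  | bit a x ih =>
    rw [← bit_bodd_div2 y, xor_bit]
    simp only [count_true_bits_bit, pow_add, ih]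
    cases a <;> cases y.bodd <;> simp

end Nat

lemma bitOverlap_eq (j k : ℕ) : bitOverlap j k = (j &&& k).bits.count true := rfl

lemma bitOverlap_comm (j k : ℕ) : bitOverlap j k = bitOverlap k j := by
  simp only [bitOverlap_eq, Nat.land_comm]

section Sylvester

variable {R : Type*} [CommRing R]

lemma neg_one_pow_bitOverlap_xor_left (a b k : ℕ) :
    (-1 : R) ^ bitOverlap (a ^^^ b) k = (-1) ^ bitOverlap a k * (-1) ^ bitOverlap b k := by
  simp only [bitOverlap_eq, Nat.and_xor_distrib_right, Nat.neg_one_pow_count_true_bits_xor]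

lemma neg_one_pow_bitOverlap_xor_right (c a b : ℕ) :
    (-1 : R) ^ bitOverlap c (a ^^^ b) = (-1) ^ bitOverlap c a * (-1) ^ bitOverlap c b := by
  simp only [bitOverlap_comm c, neg_one_pow_bitOverlap_xor_left]

lemma bitOverlap_two_pow_of_testBit {c t : ℕ} (h : c.testBit t) : bitOverlap c (2 ^ t) = 1 := by
  rw [bitOverlap_eq, Nat.and_two_pow, h, Bool.toNat_true, one_mul, Nat.count_true_bits_two_pow]

lemma sum_neg_one_pow_bitOverlap {n c : ℕ} (hc : c < 2 ^ n) :
    ∑ k ∈ Finset.range (2 ^ n), (-1 : R) ^ bitOverlap c k = if c = 0 then 2 ^ n else 0 := by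
  split_ifs with h0
  · simp [h0, bitOverlap_eq]
  obtain ⟨t, ht⟩ := Nat.exists_testBit_of_ne_zero h0
  have htn : 2 ^ t < 2 ^ n := (Nat.ge_two_pow_of_testBit ht).trans_lt hc
  -- flipping bit `t` of `k` flips the sign
  refine Finset.sum_involution (fun k _ => k ^^^ 2 ^ t) (fun k _ => ?_) (fun k _ _ => ?_)
    (fun k hk => ?_) (fun k _ => Nat.xor_xor_cancel_right k _)
  · rw [neg_one_pow_bitOverlap_xor_right, bitOverlap_two_pow_of_testBit ht]
    ring
  · simp
  · exact Finset.mem_range.2 (Nat.xor_lt_two_pow (Finset.mem_range.1 hk) htn)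

lemma sum_neg_one_pow_bitOverlap_mul {n a b : ℕ} (ha : a < 2 ^ n) (hb : b < 2 ^ n) :
    ∑ k ∈ Finset.range (2 ^ n), (-1 : R) ^ bitOverlap a k * (-1) ^ bitOverlap b k =
      if a = b then 2 ^ n else 0 := by
  simp_rw [← neg_one_pow_bitOverlap_xor_left]
  simp [sum_neg_one_pow_bitOverlap (Nat.xor_lt_two_pow ha hb)]

end Sylvester

lemma bitOverlap_mul_two_pow_add {m j r : ℕ} (i : ℕ) (hj : j < 2 ^ m) :
    bitOverlap j (i * 2 ^ m + r) = bitOverlap j r := by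
  have hmask (x : ℕ) : j &&& x = j &&& x % 2 ^ m := by
    rw [← Nat.mod_eq_of_lt ((Nat.land_comm j x).trans_lt (Nat.and_lt_two_pow x hj)),
      Nat.and_mod_two_pow, Nat.mod_eq_of_lt hj]
  rw [bitOverlap_eq, bitOverlap_eq, hmask, hmask r, Nat.mul_add_mod_self_right]

namespace Submodule

variable {𝕜 E ι : Type*} [RCLike 𝕜] [NormedAddCommGroup E] [InnerProductSpace 𝕜 E] [Fintype ι]

theorem starProjection_span_range_of_inner_eq [DecidableEq ι] (v : ι → E)
    [(span 𝕜 (Set.range v)).HasOrthogonalProjection] {c : ℝ} (hc : c ≠ 0)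
    (hv : ∀ r s, ⟪v r, v s⟫_𝕜 = if r = s then (c : 𝕜) else 0) (x : E) :
    (span 𝕜 (Set.range v)).starProjection x = (c : 𝕜)⁻¹ • ∑ r, ⟪v r, x⟫_𝕜 • v r := by
  refine eq_starProjection_of_mem_of_inner_eq_zero
    (smul_mem _ _ (sum_mem fun r _ => smul_mem _ _ (subset_span ⟨r, rfl⟩))) fun w hw => ?_
  obtain ⟨a, rfl⟩ := (mem_span_range_iff_exists_fun 𝕜).1 hw
  have hc' : (c : 𝕜) ≠ 0 := RCLike.ofReal_ne_zero.2 hc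
  simp [inner_sub_left, inner_sum, inner_smul_left, inner_smul_right, sum_inner, hv,
    mul_comm _ (c : 𝕜), hc']

end Submodule

lemma Fin.sum_sum_mul_add_eq_sum_range {M : Type*} [AddCommMonoid M] (a b : ℕ) (g : ℕ → M) :
    ∑ i : Fin a, ∑ r : Fin b, g (i * b + r) = ∑ k ∈ Finset.range (a * b), g k := by
  rw [← Fin.sum_univ_eq_sum_range, ← finProdFinEquiv.sum_comp, Fintype.sum_prod_type]
  simp only [finProdFinEquiv_apply_val, Nat.mul_comm b, Nat.add_comm]

section TruncatedSylvester

variable (n m : ℕ)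

/-- Column `k` of the Sylvester matrix of order `2ⁿ` with its first `2^m` rows deleted. -/
noncomputable def truncatedColumn (k : ℕ) : EuclideanSpace ℝ (Fin (2 ^ n - 2 ^ m)) :=
  WithLp.toLp 2 fun j => (-1 : ℝ) ^ bitOverlap (j.val + 2 ^ m) k

variable {n m}

lemma inner_truncatedColumn (hmn : m ≤ n) (k k' : ℕ) :
    ⟪truncatedColumn n m k, truncatedColumn n m k'⟫_ℝ =
      ∑ j ∈ Finset.range (2 ^ n), (-1 : ℝ) ^ bitOverlap j k * (-1) ^ bitOverlap j k' -
        ∑ j ∈ Finset.range (2 ^ m), (-1 : ℝ) ^ bitOverlap j k * (-1) ^ bitOverlap j k' := by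
  have hle : 2 ^ m ≤ 2 ^ n := Nat.pow_le_pow_right two_pos hmn
  have hsplit := Finset.sum_range_add (fun j => (-1 : ℝ) ^ bitOverlap j k * (-1) ^ bitOverlap j k')
    (2 ^ m) (2 ^ n - 2 ^ m)
  rw [Nat.add_sub_cancel' hle] at hsplit
  rw [hsplit, add_sub_cancel_left, ← Fin.sum_univ_eq_sum_range]
  simp [truncatedColumn, PiLp.inner_apply, add_comm, mul_comm]

lemma mul_two_pow_add_lt_two_pow (hmn : m ≤ n) {i r : ℕ} (hi : i < 2 ^ (n - m))
    (hr : r < 2 ^ m) : i * 2 ^ m + r < 2 ^ n :=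
  calc i * 2 ^ m + r < (i + 1) * 2 ^ m := by rw [add_one_mul]; omega
    _ ≤ 2 ^ (n - m) * 2 ^ m := Nat.mul_le_mul_right _ hi
    _ = 2 ^ n := by rw [← pow_add, Nat.sub_add_cancel hmn]

lemma inner_truncatedColumn_mul_two_pow_add (hmn : m ≤ n) {i r r' : ℕ} (hi : i < 2 ^ (n - m))
    (hr : r < 2 ^ m) (hr' : r' < 2 ^ m) :
    ⟪truncatedColumn n m (i * 2 ^ m + r), truncatedColumn n m (i * 2 ^ m + r')⟫_ℝ =
      if r = r' then (2 ^ n - 2 ^ m : ℝ) else 0 := by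
  have hfull : ∑ j ∈ Finset.range (2 ^ n),
      (-1 : ℝ) ^ bitOverlap j (i * 2 ^ m + r) * (-1) ^ bitOverlap j (i * 2 ^ m + r') =
        if r = r' then 2 ^ n else 0 := by
    simp only [bitOverlap_comm _ (i * 2 ^ m + _)]
    rw [sum_neg_one_pow_bitOverlap_mul (mul_two_pow_add_lt_two_pow hmn hi hr)
      (mul_two_pow_add_lt_two_pow hmn hi hr')]
    simp only [add_right_inj]
  have htop : ∑ j ∈ Finset.range (2 ^ m),
      (-1 : ℝ) ^ bitOverlap j (i * 2 ^ m + r) * (-1) ^ bitOverlap j (i * 2 ^ m + r') =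
        if r = r' then 2 ^ m else 0 := by
    rw [← sum_neg_one_pow_bitOverlap_mul hr hr']
    refine Finset.sum_congr rfl fun j hj => ?_
    simp only [bitOverlap_mul_two_pow_add i (Finset.mem_range.1 hj), bitOverlap_comm j]
  rw [inner_truncatedColumn hmn, hfull, htop]
  split_ifs <;> ring

lemma sum_inner_truncatedColumn_smul (x : EuclideanSpace ℝ (Fin (2 ^ n - 2 ^ m))) :
    ∑ k ∈ Finset.range (2 ^ n), ⟪truncatedColumn n m k, x⟫_ℝ • truncatedColumn n m k =
      (2 ^ n : ℝ) • x := by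
  have hrow (j j' : Fin (2 ^ n - 2 ^ m)) : ∑ k ∈ Finset.range (2 ^ n),
      (-1 : ℝ) ^ bitOverlap (j + 2 ^ m) k * (-1) ^ bitOverlap (j' + 2 ^ m) k =
        if j = j' then 2 ^ n else 0 := by
    rw [sum_neg_one_pow_bitOverlap_mul (by omega) (by omega)]
    simp [Fin.val_inj]
  ext j
  simp only [WithLp.ofLp_sum, WithLp.ofLp_smul, Finset.sum_apply, Pi.smul_apply, smul_eq_mul,
    truncatedColumn, PiLp.inner_apply, Finset.sum_mul]
  rw [Finset.sum_comm]
  calc _ = ∑ i, x i * ∑ k ∈ Finset.range (2 ^ n),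
        (-1 : ℝ) ^ bitOverlap (i + 2 ^ m) k * (-1) ^ bitOverlap (j + 2 ^ m) k := by
        simp only [Finset.mul_sum, RCLike.inner_apply, conj_trivial]
        exact Finset.sum_congr rfl fun i _ => Finset.sum_congr rfl fun k _ => by ring
    _ = 2 ^ n * x j := by simp [hrow, mul_comm]

end TruncatedSylvester

/-- The subspaces `W_i` spanned by blocks of `2^m` consecutive truncated columns
of the Sylvester matrix form a tight fusion frame for `ℝ^{2ⁿ−2^m}`:
`∑ i, P_i = (2ⁿ/(2ⁿ − 2^m)) · Id`. -/
theorem stmt_13 (n m : ℕ) (hmn : m < n)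
    (W : Fin (2 ^ (n - m)) → Submodule ℝ (EuclideanSpace ℝ (Fin (2 ^ n - 2 ^ m))))
    (hW : ∀ i : Fin (2 ^ (n - m)),
      W i = Submodule.span ℝ (Set.range (fun r : Fin (2 ^ m) =>
        (WithLp.toLp 2 (fun j : Fin (2 ^ n - 2 ^ m) =>
          ((-1 : ℝ) ^ bitOverlap (j.val + 2 ^ m) (i.val * 2 ^ m + r.val))) :
            EuclideanSpace ℝ (Fin (2 ^ n - 2 ^ m)))))) :
    ∀ x : EuclideanSpace ℝ (Fin (2 ^ n - 2 ^ m)),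
      (∑ i : Fin (2 ^ (n - m)),
          ((W i).orthogonalProjectionOnto x : EuclideanSpace ℝ (Fin (2 ^ n - 2 ^ m)))) =
        ((2 ^ n : ℝ) / ((2 ^ n : ℝ) - 2 ^ m)) • x := by
  intro x
  have hc : (2 ^ n - 2 ^ m : ℝ) ≠ 0 :=
    sub_ne_zero.2 (pow_lt_pow_right₀ one_lt_two hmn).ne'
  have hproj (i : Fin (2 ^ (n - m))) : (W i).starProjection x = (2 ^ n - 2 ^ m : ℝ)⁻¹ •
      ∑ r : Fin (2 ^ m), ⟪truncatedColumn n m (i * 2 ^ m + r), x⟫_ℝ •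
        truncatedColumn n m (i * 2 ^ m + r) := by
    have hWi : W i = Submodule.span ℝ
        (Set.range fun r : Fin (2 ^ m) => truncatedColumn n m (i * 2 ^ m + r)) := hW i
    rw [hWi]
    refine Submodule.starProjection_span_range_of_inner_eq _ hc (fun r r' => ?_) x
    rw [inner_truncatedColumn_mul_two_pow_add hmn.le i.isLt r.isLt r'.isLt]
    simp [Fin.val_inj]
  simp only [← Submodule.starProjection_apply, hproj, ← Finset.smul_sum,
    Fin.sum_sum_mul_add_eq_sum_range
      (g := fun k => ⟪truncatedColumn n m k, x⟫_ℝ • truncatedColumn n m k)]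
  rw [← pow_add, Nat.sub_add_cancel hmn.le, sum_inner_truncatedColumn_smul, smul_smul,
    inv_mul_eq_div]
end

section
/- Let n > m ≥ 0 and define H(j,k) = (−1)^{b(j,k)} for j, k ∈ {0, …, 2ⁿ − 1}, where b(j,k) is the number of bit positions at which the binary expansions of j and k both have a 1. For 0 ≤ i ≤ 2^{n−m} − 1, let W_i be the span in ℝ^{2ⁿ−2^m} of the vectors (H(j, i·2^m + r))_{2^m ≤ j ≤ 2ⁿ−1} for 0 ≤ r ≤ 2^m − 1, and let P_i be the orthogonal projection onto W_i. Then for all i₁ ≠ i₂, trace(P_{i₁} ∘ P_{i₂}) = 2^m/(2^{n−m} − 1)². -/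
/-!
Write `v_{i,r}` for column `i * 2^m + r` of the Sylvester–Hadamard matrix with its first `2^m`
rows deleted. Full columns are orthogonal of squared norm `2^n` (split off the lowest bit and
induct on `n`), and the deleted rows form the Sylvester–Hadamard matrix of order `2^m`, in which
column `i * 2^m + r` agrees with column `r`. Hence
`⟪v_{i,r}, v_{i',r'}⟫ = 2^n [(i,r) = (i',r')] - 2^m [r = r']`. So each `W_i` has the orthogonal
basis `(v_{i,r})_r` of common squared norm `c = 2^n - 2^m`, giving `P_i = c⁻¹ ∑_r v_{i,r} v_{i,r}ᵀ`,
and for `i₁ ≠ i₂`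
`trace (P_{i₁} P_{i₂}) = c⁻² ∑_{r,s} ⟪v_{i₁,r}, v_{i₂,s}⟫² = 2^m (2^m)² / c²`.
-/

open scoped InnerProductSpace

open Finset InnerProductSpace

section Projection

variable {E ι κ : Type*} [NormedAddCommGroup E] [InnerProductSpace ℝ E]
  [Fintype ι] [DecidableEq ι] [Fintype κ] [DecidableEq κ]

theorem Submodule.starProjection_eq_smul_sum_rankOne {v : ι → E} {c : ℝ} (hc : c ≠ 0)
    (hv : ∀ r s, ⟪v r, v s⟫_ℝ = if r = s then c else 0)
    (K : Submodule ℝ E) [K.HasOrthogonalProjection] (hK : K = span ℝ (Set.range v)) :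
    K.starProjection = c⁻¹ • ∑ r, rankOne ℝ (v r) (v r) := by
  subst hK
  ext1 x
  apply eq_starProjection_of_mem_of_inner_eq_zero
  · simp only [smul_apply, _root_.sum_apply, rankOne_apply]
    exact smul_mem _ _ (sum_mem fun r _ => smul_mem _ _ (subset_span ⟨r, rfl⟩))
  · suffices ∀ s, ⟪x - (c⁻¹ • ∑ r, rankOne ℝ (v r) (v r)) x, v s⟫_ℝ = 0 from fun w hw =>
      span_le (p := LinearMap.ker (innerₛₗ ℝ _)).2 (Set.range_subset_iff.2 this) hw
    intro s
    have hproj : ⟪(c⁻¹ • ∑ r, rankOne ℝ (v r) (v r)) x, v s⟫_ℝ = ⟪x, v s⟫_ℝ := by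
      simp only [smul_apply, _root_.sum_apply, rankOne_apply, real_inner_smul_left, sum_inner, hv,
        mul_ite, mul_zero, sum_ite_eq', mem_univ, if_true]
      rw [real_inner_comm, mul_comm _ c, inv_mul_cancel_left₀ hc]
    rw [inner_sub_left, hproj, sub_self]

theorem trace_starProjection_comp_starProjection [FiniteDimensional ℝ E]
    {u : ι → E} {v : κ → E} {a b : ℝ} (ha : a ≠ 0) (hb : b ≠ 0)
    (hu : ∀ r s, ⟪u r, u s⟫_ℝ = if r = s then a else 0)
    (hv : ∀ r s, ⟪v r, v s⟫_ℝ = if r = s then b else 0)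
    (K L : Submodule ℝ E) [K.HasOrthogonalProjection] [L.HasOrthogonalProjection]
    (hK : K = Submodule.span ℝ (Set.range u)) (hL : L = Submodule.span ℝ (Set.range v)) :
    LinearMap.trace ℝ E (K.starProjection ∘L L.starProjection).toLinearMap =
      (∑ r, ∑ s, ⟪u r, v s⟫_ℝ ^ 2) / (a * b) := by
  rw [K.starProjection_eq_smul_sum_rankOne ha hu hK, L.starProjection_eq_smul_sum_rankOne hb hv hL]
  simp only [ContinuousLinearMap.smul_comp, ContinuousLinearMap.comp_smul,
    ContinuousLinearMap.finsetSum_comp, ContinuousLinearMap.comp_finsetSum, rankOne_comp_rankOne,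
    ContinuousLinearMap.toLinearMap_smul, ContinuousLinearMap.toLinearMap_sum, map_smul, map_sum,
    trace_rankOne, smul_eq_mul, real_inner_comm (u _) (v _), ← sq, ← mul_sum]
  rw [sum_comm]
  ring

end Projection

theorem Nat.count_true_bits_bit_s14 (b : Bool) (n : ℕ) :
    (Nat.bit b n).bits.count true = n.bits.count true + b.toNat := by
  by_cases h : n = 0 ∧ b = false
  · obtain ⟨rfl, rfl⟩ := h
    rfl
  · rw [Nat.bits_append_bit n b (by grind), List.count_cons]
    cases b <;> simp

theorem bitOverlap_bit (a b : Bool) (j k : ℕ) :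
    bitOverlap (Nat.bit a j) (Nat.bit b k) = bitOverlap j k + (a && b).toNat :=
  (congrArg (fun x => x.bits.count true) (Nat.land_bit a j b k)).trans (Nat.count_true_bits_bit_s14 _ _)

theorem Finset.sum_range_two_mul_eq_sum_bit {M : Type*} [AddCommMonoid M] (n : ℕ) (f : ℕ → M) :
    ∑ j ∈ range (2 * n), f j = ∑ q ∈ range n, (f (Nat.bit false q) + f (Nat.bit true q)) := by
  induction n with
  | zero => simp
  | succ n ih => rw [mul_add_one, sum_range_succ, sum_range_succ, sum_range_succ, ih, add_assoc]; rfl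

theorem Nat.bit_modEq_bit_iff {b c : Bool} {k l N : ℕ} :
    Nat.bit b k ≡ Nat.bit c l [MOD 2 ^ (N + 1)] ↔ b = c ∧ k ≡ l [MOD 2 ^ N] := by
  simp only [Nat.ModEq, pow_succ', Nat.mod_mul, Nat.bit_mod_two, Nat.bit_div_two]
  cases b <;> cases c <;>
    simp only [Bool.toNat_false, Bool.toNat_true, Bool.false_eq_true, Bool.true_eq_false, true_and,
      false_and, iff_false] <;> omega

theorem sum_range_neg_one_pow_bitOverlap_mul (N : ℕ) : ∀ k l : ℕ,
    ∑ j ∈ range (2 ^ N), (-1 : ℝ) ^ bitOverlap j k * (-1) ^ bitOverlap j l =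
      if k ≡ l [MOD 2 ^ N] then 2 ^ N else 0 := by
  induction N with
  | zero => simp [Nat.modEq_one, bitOverlap]
  | succ N ih =>
    intro k l
    obtain ⟨b, k, rfl⟩ : ∃ b k', Nat.bit b k' = k := ⟨_, _, Nat.bit_testBit_zero_shiftRight_one k⟩
    obtain ⟨c, l, rfl⟩ : ∃ c l', Nat.bit c l' = l := ⟨_, _, Nat.bit_testBit_zero_shiftRight_one l⟩
    have hpair (q : ℕ) :
        (-1 : ℝ) ^ bitOverlap (Nat.bit false q) (Nat.bit b k) *
            (-1) ^ bitOverlap (Nat.bit false q) (Nat.bit c l) +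
          (-1 : ℝ) ^ bitOverlap (Nat.bit true q) (Nat.bit b k) *
            (-1) ^ bitOverlap (Nat.bit true q) (Nat.bit c l) =
        (-1 : ℝ) ^ bitOverlap q k * (-1) ^ bitOverlap q l * (1 + (-1) ^ (b.toNat + c.toNat)) := by
      simp only [bitOverlap_bit, Bool.false_and, Bool.true_and, Bool.toNat_false, pow_add]
      ring
    rw [pow_succ', sum_range_two_mul_eq_sum_bit, sum_congr rfl fun q _ => hpair q, ← sum_mul, ih,
      ← pow_succ']
    simp only [Nat.bit_modEq_bit_iff]
    cases b <;> cases c <;> simp [pow_succ, ite_mul, one_add_one_eq_two]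

theorem sum_Ico_neg_one_pow_bitOverlap_mul {m n k l : ℕ} (hmn : m ≤ n) (hk : k < 2 ^ n)
    (hl : l < 2 ^ n) :
    ∑ j ∈ Ico (2 ^ m) (2 ^ n), (-1 : ℝ) ^ bitOverlap j k * (-1) ^ bitOverlap j l =
      (if k = l then 2 ^ n else 0) - if k ≡ l [MOD 2 ^ m] then 2 ^ m else 0 := by
  have hkl : k ≡ l [MOD 2 ^ n] ↔ k = l := by
    rw [Nat.ModEq, Nat.mod_eq_of_lt hk, Nat.mod_eq_of_lt hl]
  rw [sum_Ico_eq_sub _ (Nat.pow_le_pow_right two_pos hmn), sum_range_neg_one_pow_bitOverlap_mul,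
    sum_range_neg_one_pow_bitOverlap_mul]
  simp only [hkl]

/-- Column `k` of the Sylvester–Hadamard matrix of order `2 ^ n` without its first `2 ^ m` rows;
coordinate `j` is row `j + 2 ^ m`. -/
def hadamardColumnTail (n m k : ℕ) : EuclideanSpace ℝ (Fin (2 ^ n - 2 ^ m)) :=
  WithLp.toLp 2 fun j => (-1 : ℝ) ^ bitOverlap (j.val + 2 ^ m) k

theorem inner_hadamardColumnTail {m n k l : ℕ} (hmn : m ≤ n) (hk : k < 2 ^ n) (hl : l < 2 ^ n) :
    ⟪hadamardColumnTail n m k, hadamardColumnTail n m l⟫_ℝ =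
      (if k = l then 2 ^ n else 0) - if k ≡ l [MOD 2 ^ m] then 2 ^ m else 0 := by
  rw [← sum_Ico_neg_one_pow_bitOverlap_mul hmn hk hl, sum_Ico_eq_sum_range,
    ← Fin.sum_univ_eq_sum_range, EuclideanSpace.inner_eq_star_dotProduct]
  simp [hadamardColumnTail, dotProduct, add_comm, mul_comm]

theorem Nat.mul_add_modEq_mul_add_iff {d i i' r r' : ℕ} (hr : r < d) (hr' : r' < d) :
    i * d + r ≡ i' * d + r' [MOD d] ↔ r = r' := by
  simp only [Nat.ModEq, Nat.mul_add_mod_self_right, Nat.mod_eq_of_lt hr, Nat.mod_eq_of_lt hr']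

theorem Nat.mul_add_eq_mul_add_iff {d i i' r r' : ℕ} (hr : r < d) (hr' : r' < d) :
    i * d + r = i' * d + r' ↔ i = i' ∧ r = r' := by
  refine ⟨fun h => ?_, fun ⟨hi, hr⟩ => hi ▸ hr ▸ rfl⟩
  obtain rfl : r = r' := (Nat.mul_add_modEq_mul_add_iff hr hr').1 (congrArg (· % d) h)
  exact ⟨Nat.eq_of_mul_eq_mul_right (by omega) (Nat.add_right_cancel h), rfl⟩

theorem inner_hadamardColumnTail_mul_add {n m : ℕ} (hmn : m ≤ n) (i i' : Fin (2 ^ (n - m)))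
    (r r' : Fin (2 ^ m)) :
    ⟪hadamardColumnTail n m (i * 2 ^ m + r), hadamardColumnTail n m (i' * 2 ^ m + r')⟫_ℝ =
      (if i = i' ∧ r = r' then 2 ^ n else 0) - if r = r' then 2 ^ m else 0 := by
  have hlt (i : Fin (2 ^ (n - m))) (r : Fin (2 ^ m)) : i.val * 2 ^ m + r.val < 2 ^ n :=
    calc i.val * 2 ^ m + r.val < 2 ^ (n - m) * 2 ^ m := by
          rw [mul_comm i.val]; exact Nat.mul_add_lt_mul_of_lt_of_lt i.isLt r.isLt
      _ = 2 ^ n := by rw [← pow_add, Nat.sub_add_cancel hmn]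
  simp only [inner_hadamardColumnTail hmn (hlt i r) (hlt i' r'),
    Nat.mul_add_eq_mul_add_iff r.isLt r'.isLt, Nat.mul_add_modEq_mul_add_iff r.isLt r'.isLt,
    Fin.val_inj]

/-- For distinct subspaces `W_{i₁} ≠ W_{i₂}` in the Walsh–Hadamard fusion frame
construction, `trace(P_{i₁} ∘ P_{i₂}) = 2^m/(2^{n−m} − 1)²`. -/
theorem stmt_14 (n m : ℕ) (hmn : m < n)
    (W : Fin (2 ^ (n - m)) → Submodule ℝ (EuclideanSpace ℝ (Fin (2 ^ n - 2 ^ m))))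
    (hW : ∀ i : Fin (2 ^ (n - m)),
      W i = Submodule.span ℝ (Set.range (fun r : Fin (2 ^ m) =>
        (WithLp.toLp 2 (fun j : Fin (2 ^ n - 2 ^ m) =>
          ((-1 : ℝ) ^ bitOverlap (j.val + 2 ^ m) (i.val * 2 ^ m + r.val))) :
            EuclideanSpace ℝ (Fin (2 ^ n - 2 ^ m)))))) :
    ∀ i₁ i₂ : Fin (2 ^ (n - m)), i₁ ≠ i₂ →
      LinearMap.trace ℝ (EuclideanSpace ℝ (Fin (2 ^ n - 2 ^ m)))
          ((((W i₁).subtypeL.comp (Submodule.orthogonalProjectionOnto (W i₁))).comp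
            ((W i₂).subtypeL.comp (Submodule.orthogonalProjectionOnto (W i₂)))).toLinearMap) =
        (2 ^ m : ℝ) / ((2 ^ (n - m) : ℝ) - 1) ^ 2 := by
  intro i₁ i₂ hne
  have hinner := inner_hadamardColumnTail_mul_add hmn.le
  have horth (i : Fin (2 ^ (n - m))) (r s : Fin (2 ^ m)) :
      ⟪hadamardColumnTail n m (i * 2 ^ m + r), hadamardColumnTail n m (i * 2 ^ m + s)⟫_ℝ =
        if r = s then 2 ^ n - 2 ^ m else 0 := by
    rw [hinner]; split_ifs <;> simp_all
  have hdim : (2 : ℝ) ^ n - 2 ^ m = 2 ^ m * (2 ^ (n - m) - 1) := by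
    rw [mul_sub, mul_one, ← pow_add, Nat.add_sub_cancel' hmn.le]
  have hden : (2 : ℝ) ^ (n - m) - 1 ≠ 0 :=
    sub_ne_zero.2 (one_lt_pow₀ one_lt_two (Nat.sub_ne_zero_of_lt hmn)).ne'
  have hdim_ne : (2 : ℝ) ^ n - 2 ^ m ≠ 0 := hdim ▸ mul_ne_zero (by positivity) hden
  -- `W i` is spanned by `hadamardColumnTail` vectors and the goal's operators are
  -- `starProjection`s, both up to unfolding definitions.
  refine (trace_starProjection_comp_starProjection hdim_ne hdim_ne (horth i₁) (horth i₂) _ _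
    (hW i₁) (hW i₂)).trans ?_
  have hsum : ∑ r : Fin (2 ^ m), ∑ s : Fin (2 ^ m), (-if r = s then (2 : ℝ) ^ m else 0) ^ 2 =
      2 ^ m * (2 ^ m) ^ 2 := by
    simp [apply_ite, sum_ite_eq]
  simp only [hinner, hne, false_and, if_false, zero_sub]
  rw [hsum, hdim]
  field_simp
end
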